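/- arXiv:2003.09673 — 4 statements merged into one kernel-verified Lean document; each statement's English description precedes it below -/
import Mathlib

section
/- Let D, d, d_e be positive integers with d_e ≤ d ≤ D. Let f : ℝ^D → ℝ have effective subspace spanned by the columns of a matrix U ∈ ℝ^{D×d_e} with orthonormal columns, i.e. f(x) = f(U Uᵀ x) for all x ∈ ℝ^D. Then for every fixed point x ∈ ℝ^D, for almost every D×d matrix A with respect to the Gaussian matrix measure there exists y ∈ ℝ^d such that f(A y) = f(x). In particular, if x* is a global minimizer of f with value f*, then for almost every such A there exists y* ∈ ℝ^d with f(A y*) = f*. -/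
open MeasureTheory ProbabilityTheory Matrix

noncomputable def gaussMatrix (D d : ℕ) : Measure (Fin D → Fin d → ℝ) :=
  Measure.pi fun _ : Fin D => Measure.pi fun _ : Fin d => gaussianReal 0 1

noncomputable def chiSq (n : ℕ) : Measure ℝ := gammaMeasure (n / 2) (1 / 2)

/-!
Since `f` factors through `x ↦ Uᵀ x`, it suffices to solve `Uᵀ A y = Uᵀ x`, which is possible
as soon as the square block `Uᵀ A E` is invertible, `E` selecting `de` of the `d` columns.
Its determinant is a polynomial in the entries of `A` that does not vanish at `A = U Eᵀ`, and the
zero set of a nonzero polynomial is null for every product of atomless measures on `ℝ`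
(induction on the number of variables: by Fubini, for almost every value of the other variables
the leading coefficient in the last one is nonzero, leaving finitely many roots).
-/

theorem Matrix.mulVec_surjective_of_isUnit_det_mul {m n R : Type*} [Fintype m] [DecidableEq m]
    [Fintype n] [CommRing R] (B : Matrix m n R) (E : Matrix n m R) (h : IsUnit (B * E).det) :
    Function.Surjective B.mulVec :=
  mulVec_surjective_iff_exists_right_inverse.2
    ⟨E * (B * E)⁻¹, by rw [← Matrix.mul_assoc, mul_nonsing_inv _ h]⟩

theorem MeasureTheory.Measure.pi_pi_eq_map_curry {m n X : Type*} [Fintype m] [Fintype n]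
    [MeasurableSpace X] (μ : Measure X) [IsProbabilityMeasure μ] :
    (Measure.pi fun _ : m => Measure.pi fun _ : n => μ) =
      (Measure.pi fun _ : m × n => μ).map (MeasurableEquiv.curry m n X) := by
  simp_rw [← Measure.infinitePi_eq_pi]
  exact (Measure.infinitePi_map_curry fun _ _ => μ).symm

section ZeroLocus

variable (μ : Measure ℝ) [NullSingletonClass μ]

theorem Polynomial.ae_eval_ne_zero {q : Polynomial ℝ} (hq : q ≠ 0) : ∀ᵐ y ∂μ, q.eval y ≠ 0 :=
  (Polynomial.finite_setOfPred_isRoot hq).countable.ae_notMem μ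

variable [SigmaFinite μ]

theorem MvPolynomial.ae_eval_ne_zero {ι : Type*} [Fintype ι] {p : MvPolynomial ι ℝ}
    (hp : p ≠ 0) : ∀ᵐ x ∂Measure.pi (fun _ : ι => μ), MvPolynomial.eval x p ≠ 0 := by
  refine Fintype.induction_empty_option (P := fun ι _ => ∀ p : MvPolynomial ι ℝ, p ≠ 0 →
    ∀ᵐ x ∂Measure.pi (fun _ : ι => μ), MvPolynomial.eval x p ≠ 0) ?_ ?_ ?_ ι p hp
  · intro ι κ _ e ih p hp
    let _ := Fintype.ofEquiv κ e.symm
    rw [← (measurePreserving_piCongrLeft (fun _ : κ => μ) e).map_eq,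
      (MeasurableEquiv.piCongrLeft _ e).measurableEmbedding.ae_map_iff]
    have hp' : MvPolynomial.rename e.symm p ≠ 0 :=
      (MvPolynomial.rename_injective _ e.symm.injective).ne_iff' (map_zero _) |>.2 hp
    filter_upwards [ih _ hp'] with x hx
    rw [MvPolynomial.eval_rename] at hx
    convert hx
    ext k
    obtain ⟨i, rfl⟩ := e.surjective k
    simp [MeasurableEquiv.coe_piCongrLeft, Equiv.piCongrLeft_apply_apply]
  · intro p hp
    refine .of_forall fun x => ?_
    rw [MvPolynomial.eq_C_of_isEmpty p, MvPolynomial.eval_C]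
    exact fun h => hp (by rw [MvPolynomial.eq_C_of_isEmpty p, h, map_zero])
  · intro ι _ ih p hp
    let e := (MeasurableEquiv.piOptionEquivProd fun _ : Option ι => ℝ).symm
    have hset : MeasurableSet {z | MvPolynomial.eval (e z) p ≠ 0} :=
      ((MvPolynomial.continuous_eval p).measurable.comp e.measurable)
        (measurableSet_singleton 0).compl
    rw [← Measure.pi_map_piOptionEquivProd (fun _ : Option ι => μ),
      e.measurableEmbedding.ae_map_iff, Measure.ae_prod_iff_ae_ae hset]
    set Q := MvPolynomial.optionEquivLeft ℝ ι p with hQ_def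
    have hQ : Q.leadingCoeff ≠ 0 := Polynomial.leadingCoeff_ne_zero.2
      ((MvPolynomial.optionEquivLeft ℝ ι).injective.ne_iff' (map_zero _) |>.2 hp)
    filter_upwards [ih _ hQ] with s hs
    have hQs : Q.map (MvPolynomial.eval s) ≠ 0 := by
      rw [← Polynomial.leadingCoeff_ne_zero,
        Polynomial.leadingCoeff_map_of_leadingCoeff_ne_zero _ hs]
      exact hs
    filter_upwards [Polynomial.ae_eval_ne_zero μ hQs] with y hy
    rw [hQ_def, ← MvPolynomial.optionEquivLeft_elim_eval] at hy
    convert hy with i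
    cases i <;> rfl

end ZeroLocus

theorem Matrix.ae_det_mul_mul_ne_zero {k m n : Type*} [Fintype k] [DecidableEq k] [Fintype m]
    [Fintype n] (μ : Measure ℝ) [IsProbabilityMeasure μ] [NullSingletonClass μ]
    (B : Matrix k m ℝ) (E : Matrix n k ℝ) (h : ∃ A₀ : Matrix m n ℝ, (B * A₀ * E).det ≠ 0) :
    ∀ᵐ A ∂(Measure.pi fun _ : m => Measure.pi fun _ : n => μ), (B * of A * E).det ≠ 0 := by
  let C : ℝ →+* MvPolynomial (m × n) ℝ := MvPolynomial.C
  let P : MvPolynomial (m × n) ℝ := (B.map C * mvPolynomialX m n ℝ * E.map C).det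
  have heval (A : m → n → ℝ) :
      MvPolynomial.eval (fun q => A q.1 q.2) P = (B * of A * E).det := by
    have hC : ⇑(MvPolynomial.eval fun q : m × n => A q.1 q.2) ∘ ⇑C = id :=
      funext fun r => MvPolynomial.eval_C r
    rw [RingHom.map_det, RingHom.mapMatrix_apply, Matrix.map_mul, Matrix.map_mul, Matrix.map_map,
      Matrix.map_map, hC, Matrix.map_id, Matrix.map_id]
    exact congrArg (fun X => (B * X * E).det) (mvPolynomialX_map_eval₂ (RingHom.id ℝ) (of A))
  obtain ⟨A₀, hA₀⟩ := h
  have hP : P ≠ 0 := fun h0 => hA₀ <| by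
    have h := heval A₀
    rw [h0, map_zero] at h
    exact h.symm
  rw [Measure.pi_pi_eq_map_curry, (MeasurableEquiv.curry m n ℝ).measurableEmbedding.ae_map_iff]
  filter_upwards [MvPolynomial.ae_eval_ne_zero μ hP] with x hx
  rw [← heval]
  exact hx

theorem stmt0_general (D d de : ℕ)
    (hded : de ≤ d)
    (f : (Fin D → ℝ) → ℝ) (U : Matrix (Fin D) (Fin de) ℝ)
    (hU : U.transpose * U = 1)
    (heff : ∀ x : Fin D → ℝ, f x = f (U.mulVec (U.transpose.mulVec x))) :
    (∀ x : Fin D → ℝ,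
      ∀ᵐ A ∂ (gaussMatrix D d), ∃ y : Fin d → ℝ, f (Matrix.mulVec A y) = f x) ∧
    (∀ xstar : Fin D → ℝ, (∀ x : Fin D → ℝ, f xstar ≤ f x) →
      ∀ᵐ A ∂ (gaussMatrix D d), ∃ ystar : Fin d → ℝ, f (Matrix.mulVec A ystar) = f xstar) := by
  have := nullSingletonClass_gaussianReal (μ := 0) one_ne_zero
  let E : Matrix (Fin d) (Fin de) ℝ := (1 : Matrix (Fin d) (Fin d) ℝ).submatrix id (Fin.castLE hded)
  have hE : Eᵀ * E = 1 := by
    rw [transpose_submatrix, transpose_one, ← submatrix_mul _ _ _ _ _ Function.bijective_id,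
      Matrix.mul_one, submatrix_one _ (Fin.castLE_injective hded)]
  have hgeneric : ∀ᵐ A ∂gaussMatrix D d, (Uᵀ * of A * E).det ≠ 0 :=
    ae_det_mul_mul_ne_zero _ Uᵀ E ⟨U * Eᵀ, by simp [Matrix.mul_assoc, hU, hE]⟩
  have hreach (x : Fin D → ℝ) : ∀ᵐ A ∂gaussMatrix D d, ∃ y, f (A *ᵥ y) = f x := by
    filter_upwards [hgeneric] with A hA
    obtain ⟨y, hy⟩ :=
      (Uᵀ * A).mulVec_surjective_of_isUnit_det_mul E hA.isUnit (Uᵀ *ᵥ x)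
    have hproj : Uᵀ *ᵥ (A *ᵥ y) = Uᵀ *ᵥ x := by rw [mulVec_mulVec, hy]
    exact ⟨y, by rw [heff, hproj, ← heff]⟩
  exact ⟨hreach, fun xstar _ => hreach xstar⟩

theorem stmt0 (D d de : ℕ) (hD : 0 < D) (hd : 0 < d) (hde : 0 < de)
    (hded : de ≤ d) (hdD : d ≤ D)
    (f : (Fin D → ℝ) → ℝ) (U : Matrix (Fin D) (Fin de) ℝ)
    (hU : U.transpose * U = 1)
    (heff : ∀ x : Fin D → ℝ, f x = f (U.mulVec (U.transpose.mulVec x))) :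
    (∀ x : Fin D → ℝ,
      ∀ᵐ A ∂ (gaussMatrix D d), ∃ y : Fin d → ℝ, f (Matrix.mulVec A y) = f x) ∧
    (∀ xstar : Fin D → ℝ, (∀ x : Fin D → ℝ, f xstar ≤ f x) →
      ∀ᵐ A ∂ (gaussMatrix D d), ∃ ystar : Fin d → ℝ, f (Matrix.mulVec A ystar) = f xstar) :=
  stmt0_general D d de hded f U hU heff
end

section
/- Let n be a positive integer and let X be a chi-squared random variable with n degrees of freedom. Then for every x > 0, P[X ≤ x] ≤ (4 / (n(n+2)Γ(n/2))) · (1 + (n/2)·e^{−x/2}) · (x/2)^{n/2}. -/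
open MeasureTheory ProbabilityTheory Matrix

/-!
Bounding the convex function `t ↦ exp (-(r t))` on `[0, x]` by its chord turns the gamma density
`r ^ a / Γ(a) · t ^ (a - 1) e^{-rt}` into a combination of two powers of `t`, which integrate
exactly; since `Γ(a + 2) = a (a + 1) Γ(a)`, the result is
`P[X ≤ x] ≤ (1 + a e^{-rx}) (rx) ^ a / Γ(a + 2)`, and `a = n / 2`, `r = 1 / 2` gives the theorem.
-/

open Real Set

lemma Real.exp_neg_mul_le_chord (r : ℝ) {t x : ℝ} (ht : 0 ≤ t) (htx : t ≤ x) :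
    exp (-(r * t)) ≤ 1 + (exp (-(r * x)) - 1) / x * t := by
  obtain rfl | hx := (ht.trans htx).eq_or_lt
  · simp [le_antisymm htx ht]
  have hs : t / x ≤ 1 := (div_le_one hx).2 htx
  have := convexOn_exp.2 (mem_univ 0) (mem_univ (-(r * x))) (sub_nonneg.2 hs)
    (div_nonneg ht hx.le) (sub_add_cancel 1 _)
  simp only [smul_eq_mul, mul_zero, zero_add, exp_zero, mul_one] at this
  calc exp (-(r * t)) = exp (t / x * -(r * x)) := by field_simp
    _ ≤ 1 - t / x + t / x * exp (-(r * x)) := this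
    _ = 1 + (exp (-(r * x)) - 1) / x * t := by ring

lemma Real.Gamma_add_two {a : ℝ} (ha : 0 < a) : Gamma (a + 2) = (a + 1) * (a * Gamma a) := by
  rw [show a + 2 = a + 1 + 1 by ring, Gamma_add_one (by positivity), Gamma_add_one ha.ne']

namespace ProbabilityTheory

lemma gammaPDFReal_le_of_mem_Ioc {a r t x : ℝ} (ha : 0 < a) (hr : 0 ≤ r) (ht : t ∈ Ioc 0 x) :
    gammaPDFReal a r t ≤
      r ^ a / Gamma a * (t ^ (a - 1) + (exp (-(r * x)) - 1) / x * t ^ a) := by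
  obtain ⟨ht0, htx⟩ := ht
  have hpow : t ^ (a - 1) * t = t ^ a := by
    rw [← rpow_add_one ht0.ne', sub_add_cancel]
  calc gammaPDFReal a r t = r ^ a / Gamma a * (t ^ (a - 1) * exp (-(r * t))) := by
        rw [gammaPDFReal, if_pos ht0.le, mul_assoc]
    _ ≤ r ^ a / Gamma a * (t ^ (a - 1) * (1 + (exp (-(r * x)) - 1) / x * t)) := by
        have := Gamma_pos_of_pos ha
        gcongr
        exact exp_neg_mul_le_chord r ht0.le htx
    _ = r ^ a / Gamma a * (t ^ (a - 1) + (exp (-(r * x)) - 1) / x * t ^ a) := by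
        rw [← hpow]; ring

lemma gammaMeasure_Iic_eq_setLIntegral_Ioc (a r : ℝ) {x : ℝ} (hx : 0 ≤ x) :
    gammaMeasure a r (Iic x) = ∫⁻ t in Ioc 0 x, gammaPDF a r t := by
  rw [gammaMeasure, withDensity_apply _ measurableSet_Iic,
    lintegral_Iic_eq_lintegral_Iio_add_Icc _ hx, lintegral_gammaPDF_of_nonpos le_rfl, zero_add,
    setLIntegral_congr Ioc_ae_eq_Icc]

lemma integral_rpow_sub_one_add_mul_rpow {a : ℝ} (ha : 0 < a) (c x : ℝ) :
    ∫ t in (0)..x, (t ^ (a - 1) + c * t ^ a) = x ^ a / a + c * (x ^ (a + 1) / (a + 1)) := by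
  rw [intervalIntegral.integral_add, intervalIntegral.integral_const_mul,
    integral_rpow (Or.inl (by linarith)), integral_rpow (Or.inl (by linarith)),
    sub_add_cancel, zero_rpow ha.ne', zero_rpow (by positivity)]
  · simp
  · exact intervalIntegral.intervalIntegrable_rpow' (by linarith)
  · exact (intervalIntegral.intervalIntegrable_rpow' (by linarith)).const_mul c

lemma gammaMeasure_Iic_le {a r x : ℝ} (ha : 0 < a) (hr : 0 < r) (hx : 0 < x) :
    gammaMeasure a r (Iic x) ≤
      ENNReal.ofReal ((1 + a * exp (-(r * x))) * (r * x) ^ a / Gamma (a + 2)) := by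
  set g : ℝ → ℝ := fun t ↦
    r ^ a / Gamma a * (t ^ (a - 1) + (exp (-(r * x)) - 1) / x * t ^ a)
  have hg : ∀ t ∈ Ioc 0 x, gammaPDFReal a r t ≤ g t := fun t ht ↦
    gammaPDFReal_le_of_mem_Ioc ha hr.le ht
  have hg_int : IntegrableOn g (Ioc 0 x) :=
    (intervalIntegrable_iff_integrableOn_Ioc_of_le hx.le).1 <|
      ((intervalIntegral.intervalIntegrable_rpow' (by linarith)).add
        ((intervalIntegral.intervalIntegrable_rpow' (by linarith)).const_mul _)).const_mul _
  have hg_nonneg : 0 ≤ᵐ[volume.restrict (Ioc 0 x)] g :=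
    (ae_restrict_iff' measurableSet_Ioc).2 <| ae_of_all _ fun t ht ↦
      (gammaPDFReal_nonneg ha hr t).trans (hg t ht)
  calc gammaMeasure a r (Iic x) = ∫⁻ t in Ioc 0 x, gammaPDF a r t :=
        gammaMeasure_Iic_eq_setLIntegral_Ioc a r hx.le
    _ ≤ ∫⁻ t in Ioc 0 x, ENNReal.ofReal (g t) :=
        setLIntegral_mono (by fun_prop) fun t ht ↦ ENNReal.ofReal_le_ofReal (hg t ht)
    _ = ENNReal.ofReal (∫ t in (0)..x, g t) := by
        rw [intervalIntegral.integral_of_le hx.le,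
          ofReal_integral_eq_lintegral_ofReal hg_int hg_nonneg]
    _ = ENNReal.ofReal ((1 + a * exp (-(r * x))) * (r * x) ^ a / Gamma (a + 2)) := by
        rw [intervalIntegral.integral_const_mul, integral_rpow_sub_one_add_mul_rpow ha,
          rpow_add_one hx.ne', mul_rpow hr.le hx.le, Gamma_add_two ha]
        congr 1
        have := Gamma_pos_of_pos ha
        field_simp
        ring

end ProbabilityTheory

theorem stmt10 (n : ℕ) (hn : 0 < n) (x : ℝ) (hx : 0 < x) :
    chiSq n (Set.Iic x) ≤ ENNReal.ofReal
      ((4 / ((n : ℝ) * ((n : ℝ) + 2) * Real.Gamma ((n : ℝ) / 2))) *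
        (1 + ((n : ℝ) / 2) * Real.exp (-x / 2)) * (x / 2) ^ ((n : ℝ) / 2)) := by
  have ha : 0 < (n : ℝ) / 2 := by positivity
  refine (gammaMeasure_Iic_le ha one_half_pos hx).trans_eq (congrArg ENNReal.ofReal ?_)
  rw [Gamma_add_two ha, div_mul_eq_mul_div, mul_comm (1 / 2 : ℝ) x, neg_div]
  have := Gamma_pos_of_pos ha
  field_simp
  ring
end

section
/- Let n be a positive integer, let X be a chi-squared random variable with n degrees of freedom, and let R = X^{−1/2} (the square root of the inverse chi-squared random variable Y = 1/X). Then the law of R is absolutely continuous with respect to Lebesgue measure on ℝ with density g(r) = (2^{−n/2+1}/Γ(n/2)) · r^{−n−1} · e^{−1/(2r²)} for r > 0 (and density 0 for r ≤ 0); that is, the pushforward of the chi-squared distribution with n degrees of freedom under t ↦ t^{−1/2} equals the measure with this Lebesgue density. -/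
/-!
The map `t ↦ t ^ (-1/2)` is a diffeomorphism of `(0, ∞)` with inverse `r ↦ r ^ (-2)`, whose
derivative has absolute value `2 r ^ (-3)`. Since the gamma density vanishes on `(-∞, 0)`, the
one-dimensional change of variables formula shows that the image of `Gamma(a, β)` has density
`2 r ^ (-3) · gammaPDF a β (r ^ (-2)) = 2 β ^ a / Γ(a) · r ^ (-2a-1) · exp (-β / r ^ 2)` on
`(0, ∞)`; for `a = n/2`, `β = 1/2` this is `g`.
-/

open MeasureTheory ProbabilityTheory Matrix

open Set Real
open scoped ENNReal

theorem map_restrict_withDensity_eq_withDensity_abs_deriv_mul {s u : Set ℝ}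
    (hs : MeasurableSet s) {f : ℝ → ℝ≥0∞} {φ φ' ψ : ℝ → ℝ} (hψ : Measurable ψ) (hφ : BijOn φ s u)
    (hψφ : LeftInvOn ψ φ s) (hφ' : ∀ x ∈ s, HasDerivWithinAt φ (φ' x) s x) :
    Measure.map ψ ((volume.restrict u).withDensity f) =
      (volume.restrict s).withDensity fun r => ENNReal.ofReal |φ' r| * f (φ r) := by
  ext t ht
  have hpre : ψ ⁻¹' t ∩ u = φ '' (t ∩ s) := by
    rw [hψφ.image_inter', hφ.image_eq]
  rw [Measure.map_apply hψ ht, withDensity_apply _ (hψ ht), withDensity_apply _ ht,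
    Measure.restrict_restrict (hψ ht), Measure.restrict_restrict ht, hpre,
    lintegral_image_eq_lintegral_abs_deriv_mul (ht.inter hs)
      (fun x hx => (hφ' x hx.2).mono inter_subset_right) (hφ.injOn.mono inter_subset_right)]

theorem withDensity_eq_restrict_Ioi_withDensity {f : ℝ → ℝ≥0∞} (hf : ∀ x < 0, f x = 0) :
    volume.withDensity f = (volume.restrict (Ioi 0)).withDensity f := by
  have hf_ind : (Ici 0).indicator f = f :=
    indicator_eq_self.mpr fun x hx => not_lt.mp fun hx' => hx (hf x hx')
  rw [Measure.restrict_congr_set Ioi_ae_eq_Ici, ← withDensity_indicator measurableSet_Ici,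
    hf_ind]

theorem map_rpow_withDensity {f : ℝ → ℝ≥0∞} (hf : ∀ x < 0, f x = 0) {p : ℝ} (hp : p ≠ 0) :
    (volume.withDensity f).map (fun x => x ^ p) =
      volume.withDensity ((Ioi 0).indicator fun r =>
        ENNReal.ofReal |p⁻¹ * r ^ (p⁻¹ - 1)| * f (r ^ p⁻¹)) := by
  have hinv : InvOn (fun x : ℝ => x ^ p) (fun x => x ^ p⁻¹) (Ioi 0) (Ioi 0) :=
    ⟨fun x hx => rpow_inv_rpow (le_of_lt hx) hp,
      fun x hx => rpow_rpow_inv (le_of_lt hx) hp⟩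
  have hmaps (q : ℝ) : MapsTo (fun x : ℝ => x ^ q) (Ioi 0) (Ioi 0) :=
    fun x hx => rpow_pos_of_pos hx q
  rw [withDensity_eq_restrict_Ioi_withDensity hf, withDensity_indicator measurableSet_Ioi,
    map_restrict_withDensity_eq_withDensity_abs_deriv_mul measurableSet_Ioi (by fun_prop)
      (hinv.bijOn (hmaps _) (hmaps _)) hinv.1]
  intro x hx
  exact (hasDerivAt_rpow_const (Or.inl (ne_of_gt hx))).hasDerivWithinAt

theorem ofReal_abs_deriv_mul_gammaPDF_rpow_neg_two {a β r : ℝ} (hr : 0 < r) :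
    ENNReal.ofReal |-2 * r ^ (-2 - 1 : ℝ)| * gammaPDF a β (r ^ (-2 : ℝ)) =
      ENNReal.ofReal (2 * β ^ a / Gamma a * r ^ (-2 * a - 1) * exp (-β / r ^ 2)) := by
  have habs : |-2 * r ^ (-2 - 1 : ℝ)| = 2 * r ^ (-3 : ℝ) := by
    rw [abs_mul, abs_of_pos (rpow_pos_of_pos hr _)]
    norm_num
  have hpow : r ^ (-3 : ℝ) * (r ^ (-2 : ℝ)) ^ (a - 1) = r ^ (-2 * a - 1) := by
    rw [← rpow_mul hr.le, ← rpow_add hr]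
    ring_nf
  have hexp : β * r ^ (-2 : ℝ) = β / r ^ 2 := by
    rw [rpow_neg hr.le, rpow_two, div_eq_mul_inv]
  rw [gammaPDF_of_nonneg (rpow_nonneg hr.le _), habs, ← ENNReal.ofReal_mul (by positivity),
    hexp, neg_div, ← hpow]
  ring_nf

theorem two_mul_half_rpow (x : ℝ) : 2 * (1 / 2 : ℝ) ^ x = 2 ^ (-x + 1) := by
  rw [rpow_add two_pos, rpow_neg zero_le_two, one_div, inv_rpow zero_le_two, rpow_one, mul_comm]

theorem stmt11_general (n : ℕ) :
    Measure.map (fun t : ℝ => t ^ (-(1 : ℝ) / 2)) (chiSq n)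
      = volume.withDensity (fun r : ℝ => ENNReal.ofReal (
          if 0 < r then
            (2 : ℝ) ^ (-(n : ℝ) / 2 + 1) / Real.Gamma ((n : ℝ) / 2) *
              r ^ (-(n : ℝ) - 1) * Real.exp (-1 / (2 * r ^ 2))
          else 0)) := by
  have hinv : (-(1 : ℝ) / 2)⁻¹ = -2 := by norm_num
  rw [chiSq, gammaMeasure, map_rpow_withDensity (fun x hx => gammaPDF_of_neg hx) (by norm_num),
    hinv]
  congr 1
  funext r
  by_cases hr : 0 < r
  · rw [indicator_of_mem (mem_Ioi.mpr hr), if_pos hr,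
      ofReal_abs_deriv_mul_gammaPDF_rpow_neg_two hr, two_mul_half_rpow]
    ring_nf
  · rw [indicator_of_notMem (mt mem_Ioi.mp hr), if_neg hr, ENNReal.ofReal_zero]

theorem stmt11 (n : ℕ) (hn : 0 < n) :
    Measure.map (fun t : ℝ => t ^ (-(1 : ℝ) / 2)) (chiSq n)
      = volume.withDensity (fun r : ℝ => ENNReal.ofReal (
          if 0 < r then
            (2 : ℝ) ^ (-(n : ℝ) / 2 + 1) / Real.Gamma ((n : ℝ) / 2) *
              r ^ (-(n : ℝ) - 1) * Real.exp (-1 / (2 * r ^ 2))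
          else 0)) :=
  stmt11_general n
end

section
/- Let d_e ≤ d be positive integers and let z ∈ ℝ^{d_e} be a fixed nonzero vector. For a d_e×d matrix B define y₂(B) = Bᵀ (B Bᵀ)⁻¹ z (defined for the almost-every B for which B Bᵀ is invertible, with an arbitrary value otherwise). Then the law of y₂ under the Gaussian matrix measure is spherically symmetric: for every orthogonal d×d matrix S, the pushforward of the Gaussian matrix measure under B ↦ S·y₂(B) equals the pushforward under B ↦ y₂(B). -/
open MeasureTheory ProbabilityTheory Matrix

/-!
Right multiplication by an orthogonal matrix `S` fixes the Gram matrix `B Bᵀ`, so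
`y₂(B Sᵀ) = S y₂(B)` whenever `B Bᵀ` is invertible. The rows of a Gaussian matrix are independent
standard Gaussian vectors, whose law is invariant under `S`; hence `B ↦ B Sᵀ` preserves the Gaussian
matrix measure, and the law of `y₂` equals that of `S y₂`. This needs `B Bᵀ` to be invertible almost
surely, i.e. the `dₑ ≤ d` rows to be almost surely linearly independent: conditionally on the other
rows, a row lies in their span, a proper subspace, with probability zero (a proper subspace lies in
the kernel of a nonzero linear form, whose law is a nondegenerate real Gaussian).
-/

theorem MeasurableEmbedding.map_map_eq_map_comp {α β γ : Type*} [MeasurableSpace α]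
    [MeasurableSpace β] [MeasurableSpace γ] {f : α → β} (hf : MeasurableEmbedding f)
    (g : β → γ) (μ : Measure α) : (μ.map f).map g = μ.map (g ∘ f) := by
  by_cases hg : AEMeasurable g (μ.map f)
  · exact AEMeasurable.map_map_of_aemeasurable hg hf.measurable.aemeasurable
  · rw [Measure.map_of_not_aemeasurable hg,
      Measure.map_of_not_aemeasurable (hf.aemeasurable_map_iff.not.mp hg)]

namespace Matrix

variable {ι : Type*} [Fintype ι]

theorem isUnit_mul_transpose_iff_linearIndependent_row {m R : Type*} [Fintype m]
    [DecidableEq m] [Field R] [LinearOrder R] [IsStrictOrderedRing R]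
    (A : Matrix m ι R) : IsUnit (A * Aᵀ) ↔ LinearIndependent R A.row := by
  rw [← mulVec_injective_iff_isUnit, ← col_transpose, ← mulVec_injective_iff,
    ← coe_mulVecLin, ← coe_mulVecLin, ← LinearMap.ker_eq_bot, ← LinearMap.ker_eq_bot]
  simpa using congrArg (· = ⊥) (ker_mulVecLin_transpose_mul_self Aᵀ)

theorem mul_transpose_mul_transpose_of_transpose_mul_eq_one [DecidableEq ι] {m R : Type*}
    [CommRing R] (A : Matrix m ι R) {S : Matrix ι ι R} (hS : Sᵀ * S = 1) :
    A * Sᵀ * (A * Sᵀ)ᵀ = A * Aᵀ := by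
  rw [transpose_mul, transpose_transpose, Matrix.mul_assoc, ← Matrix.mul_assoc Sᵀ, hS,
    Matrix.one_mul]

theorem toEuclideanCLM_mem_unitary [DecidableEq ι] {S : Matrix ι ι ℝ} (hS : Sᵀ * S = 1) :
    toEuclideanCLM (𝕜 := ℝ) S ∈ unitary _ := by
  have hS' : star S * S = 1 := hS
  rw [Unitary.mem_iff, ← map_star, ← map_mul, ← map_mul, hS', mul_eq_one_comm.mp hS', map_one]
  exact ⟨rfl, rfl⟩

noncomputable def orthogonalMulVecEquiv [DecidableEq ι] (S : Matrix ι ι ℝ)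
    (hS : Sᵀ * S = 1) : (ι → ℝ) ≃ᵐ (ι → ℝ) where
  toFun := (S *ᵥ ·)
  invFun := (Sᵀ *ᵥ ·)
  left_inv x := by simp only [mulVec_mulVec, hS, one_mulVec]
  right_inv x := by simp only [mulVec_mulVec, mul_eq_one_comm.mp hS, one_mulVec]
  measurable_toFun := show Measurable (S *ᵥ ·) by fun_prop
  measurable_invFun := show Measurable (Sᵀ *ᵥ ·) by fun_prop

end Matrix

theorem measurableSet_setOf_linearIndependent {m ι : Type*} [Fintype m] [Fintype ι] :
    MeasurableSet {c : m → ι → ℝ | LinearIndependent ℝ c} := by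
  classical
  have hdet : {c : m → ι → ℝ | LinearIndependent ℝ c} =
      (fun c => (of c * (of c)ᵀ).det) ⁻¹' {0}ᶜ := by
    ext c
    simp [← isUnit_iff_ne_zero, ← isUnit_iff_isUnit_det,
      isUnit_mul_transpose_iff_linearIndependent_row]
  rw [hdet]
  exact (Continuous.measurable (by fun_prop)) (measurableSet_singleton 0).compl

theorem span_range_ne_top_of_lt_card {ι : Type*} [Fintype ι] {m : ℕ} (hm : m < Fintype.card ι)
    (c : Fin m → ι → ℝ) : Submodule.span ℝ (Set.range c) ≠ ⊤ := by
  intro htop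
  have hrank := finrank_range_le_card (R := ℝ) c
  rw [Set.finrank, htop, finrank_top, Module.finrank_fintype_fun_eq_card,
    Fintype.card_fin] at hrank
  omega

theorem measure_pi_setOf_not_linearIndependent_eq_zero {ι : Type*} [Fintype ι]
    (ν : Measure (ι → ℝ)) [SigmaFinite ν] (hν : ∀ V : Submodule ℝ (ι → ℝ), V ≠ ⊤ → ν V = 0) :
    ∀ m ≤ Fintype.card ι, (Measure.pi fun _ : Fin m => ν) {c | ¬ LinearIndependent ℝ c} = 0
  | 0, _ => by simp
  | m + 1, hm => by
    set e := MeasurableEquiv.piFinSuccAbove (fun _ : Fin (m + 1) => ι → ℝ) 0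
    have hmeas : MeasurableSet (e.symm ⁻¹' {c | ¬ LinearIndependent ℝ c}) :=
      e.symm.measurable measurableSet_setOf_linearIndependent.compl
    have hsection : ∀ c : Fin m → ι → ℝ, LinearIndependent ℝ c →
        (fun x => (x, c)) ⁻¹' (e.symm ⁻¹' {c | ¬ LinearIndependent ℝ c})
          = Submodule.span ℝ (Set.range c) := by
      intro c hc
      ext x
      simp only [e, Set.mem_preimage, Set.mem_ofPred_eq, SetLike.mem_coe,
        MeasurableEquiv.piFinSuccAbove_symm_apply, Fin.insertNthEquiv_zero]
      change ¬ LinearIndependent ℝ (Fin.cons x c : Fin (m + 1) → ι → ℝ) ↔ _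
      simp [linearIndependent_finCons, hc]
    rw [← ((measurePreserving_piFinSuccAbove (fun _ => ν) 0).symm e).measure_preimage_equiv,
      Measure.prod_apply_symm hmeas]
    refine lintegral_eq_zero_of_ae_eq_zero ?_
    have hnull := measure_pi_setOf_not_linearIndependent_eq_zero ν hν m (by omega)
    filter_upwards [ae_iff.mpr hnull] with c hc
    rw [hsection c hc]
    exact hν _ (span_range_ne_top_of_lt_card (by omega) c)

theorem stdGaussian_submodule_eq_zero {E : Type*} [NormedAddCommGroup E] [InnerProductSpace ℝ E]
    [FiniteDimensional ℝ E] [MeasurableSpace E] [BorelSpace E] {V : Submodule ℝ E} (hV : V ≠ ⊤) :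
    stdGaussian E V = 0 := by
  obtain ⟨w, hwV, hw⟩ := Submodule.exists_mem_ne_zero_of_ne_bot
    (mt Submodule.orthogonal_eq_bot_iff.mp hV)
  set L : StrongDual ℝ E := innerSL ℝ w
  have hVL : (V : Set E) ⊆ L ⁻¹' {0} := fun v hv =>
    Submodule.inner_left_of_mem_orthogonal hv hwV
  have hvar : (Var[L; stdGaussian E]).toNNReal ≠ 0 := by
    rw [variance_dual_stdGaussian, innerSL_apply_norm]
    simpa using hw
  refine measure_mono_null hVL ?_
  rw [← Measure.map_apply (by fun_prop) (measurableSet_singleton 0),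
    IsGaussian.map_eq_gaussianReal]
  exact gaussianReal_absolutelyContinuous _ hvar Real.volume_singleton

section StandardGaussianVector

open WithLp

variable {ι : Type*} [Fintype ι]

theorem pi_gaussianReal_eq_map_ofLp :
    Measure.pi (fun _ : ι => gaussianReal 0 1) = (stdGaussian (EuclideanSpace ℝ ι)).map ofLp := by
  rw [← map_pi_eq_stdGaussian, Measure.map_map (by fun_prop) (by fun_prop)]
  exact Measure.map_id.symm

theorem pi_gaussianReal_submodule_eq_zero {V : Submodule ℝ (ι → ℝ)} (hV : V ≠ ⊤) :
    Measure.pi (fun _ : ι => gaussianReal 0 1) V = 0 := by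
  rw [pi_gaussianReal_eq_map_ofLp,
    Measure.map_apply (by fun_prop) V.closed_of_finiteDimensional.measurableSet]
  refine stdGaussian_submodule_eq_zero
    (V := V.comap (WithLp.linearEquiv 2 ℝ (ι → ℝ)).toLinearMap) fun htop => ?_
  refine hV (eq_top_iff.mpr fun x _ => ?_)
  simpa using htop.ge (Submodule.mem_top (x := toLp 2 x))

theorem measurePreserving_mulVec_pi_gaussianReal [DecidableEq ι] {S : Matrix ι ι ℝ}
    (hS : Sᵀ * S = 1) :
    MeasurePreserving (S *ᵥ ·) (Measure.pi fun _ : ι => gaussianReal 0 1)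
      (Measure.pi fun _ : ι => gaussianReal 0 1) := by
  set f := Unitary.linearIsometryEquiv ⟨_, toEuclideanCLM_mem_unitary hS⟩
  have hf : (S *ᵥ ·) ∘ ofLp = ofLp ∘ f := rfl
  refine ⟨by fun_prop, ?_⟩
  rw [pi_gaussianReal_eq_map_ofLp, Measure.map_map (by fun_prop) (by fun_prop), hf,
    ← Measure.map_map (by fun_prop) (by fun_prop), stdGaussian_map f]

end StandardGaussianVector

theorem ae_isUnit_mul_transpose_gaussMatrix {de d : ℕ} (h : de ≤ d) :
    ∀ᵐ B ∂gaussMatrix de d, IsUnit (of B * (of B)ᵀ) := by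
  have hnull := measure_pi_setOf_not_linearIndependent_eq_zero (ι := Fin d) _
    (fun _ => pi_gaussianReal_submodule_eq_zero) de (by simpa using h)
  filter_upwards [ae_iff.mpr hnull] with B hB
  exact (isUnit_mul_transpose_iff_linearIndependent_row _).mpr hB

theorem stmt13_general (de d : ℕ) (h : de ≤ d)
    (z : Fin de → ℝ)
    (y2 : (Fin de → Fin d → ℝ) → (Fin d → ℝ))
    (hy2 : ∀ B : Fin de → Fin d → ℝ,
      IsUnit (Matrix.of B * (Matrix.of B).transpose) →
      y2 B = ((Matrix.of B).transpose *
        (Matrix.of B * (Matrix.of B).transpose)⁻¹).mulVec z) :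
    ∀ S : Matrix (Fin d) (Fin d) ℝ, S.transpose * S = 1 →
      Measure.map (fun B => S.mulVec (y2 B)) (gaussMatrix de d)
        = Measure.map y2 (gaussMatrix de d) := by
  intro S hS
  set T := MeasurableEquiv.piCongrRight fun _ : Fin de => orthogonalMulVecEquiv S hS
  have hT : MeasurePreserving T (gaussMatrix de d) (gaussMatrix de d) :=
    measurePreserving_pi _ _ fun _ => measurePreserving_mulVec_pi_gaussianReal hS
  have hrows : ∀ B, of (T B) = of B * Sᵀ := fun B => by
    change of (fun i => S *ᵥ B i) = _
    ext i j
    simp [mul_apply, mulVec, dotProduct, mul_comm]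
  have hae : y2 ∘ T =ᵐ[gaussMatrix de d] fun B => S *ᵥ y2 B := by
    filter_upwards [ae_isUnit_mul_transpose_gaussMatrix h] with B hB
    have hgram := mul_transpose_mul_transpose_of_transpose_mul_eq_one (of B) hS
    rw [Function.comp_apply, hy2 _ (by rwa [hrows, hgram]), hy2 B hB, hrows, hgram,
      transpose_mul, transpose_transpose, Matrix.mul_assoc, ← mulVec_mulVec]
  rw [← Measure.map_congr hae, ← T.measurableEmbedding.map_map_eq_map_comp, hT.map_eq]

theorem stmt13 (de d : ℕ) (hde : 0 < de) (hd : 0 < d) (h : de ≤ d)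
    (z : Fin de → ℝ) (hz : z ≠ 0)
    (y2 : (Fin de → Fin d → ℝ) → (Fin d → ℝ))
    (hy2 : ∀ B : Fin de → Fin d → ℝ,
      IsUnit (Matrix.of B * (Matrix.of B).transpose) →
      y2 B = ((Matrix.of B).transpose *
        (Matrix.of B * (Matrix.of B).transpose)⁻¹).mulVec z) :
    ∀ S : Matrix (Fin d) (Fin d) ℝ, S.transpose * S = 1 →
      Measure.map (fun B => S.mulVec (y2 B)) (gaussMatrix de d)
        = Measure.map y2 (gaussMatrix de d) :=
  stmt13_general de d h z y2 hy2
end
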